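/- arXiv:2003.12653 — 10 statements merged into one kernel-verified Lean document; each statement's English description precedes it below -/
import Mathlib

section
/- For every non-negative integer n and every real (or rational function) variable x, the identity ∑_{k=0}^{n} C(-x-1, k)^2 · C(x, n-k)^2 = ∑_{k=0}^{n} C(n+k, 2k) · C(2k, k)^2 · C(x+k, 2k) holds as an identity of polynomials in x. -/
/-!
Both sides are polynomials of degree at most `2n`, and both are invariant under `x ↦ -x - 1`.
At `x = m ∈ ℕ` they become natural-number sums `L(n, m)` and `R(n, m)`, each symmetric in `n`
and `m`, which agree on the diagonal `m = n`. Argue by strong induction on `n`: for `m < n`,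
`L(n, m) = L(m, n) = R(m, n) = R(n, m)` by the identity for `m` evaluated at `x = n`. So the two
polynomials agree at the `2n + 2` points `0, …, n` and `-1, …, -n - 1`, hence coincide.
-/

open Finset Polynomial

namespace Ring

variable {R : Type*} [CommRing R] [BinomialRing R]

theorem choose_neg_sub_one (r : R) (k : ℕ) :
    choose (-r - 1) k = Int.negOnePow k • choose (r + k) k := by
  rw [← neg_add', choose_neg, add_right_comm, add_sub_cancel_right]

theorem choose_neg_sub_one_sq (r : R) (k : ℕ) :
    choose (-r - 1) k ^ 2 = choose (r + k) k ^ 2 := by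
  rw [choose_neg_sub_one, Units.smul_def, _root_.smul_pow, ← Units.val_pow_eq_pow_val,
    Int.units_sq, Units.val_one, one_smul]

theorem choose_neg_sub_one_add_two_mul (r : R) (k : ℕ) :
    choose (-r - 1 + k) (2 * k) = choose (r + k) (2 * k) := by
  rw [show -r - 1 + k = -(r - k) - 1 by ring, choose_neg_sub_one, Nat.cast_mul, Nat.cast_ofNat,
    Int.negOnePow_two_mul, one_smul]
  congr 1
  push_cast
  ring

end Ring

theorem Polynomial.natDegree_ringChoose_le {K : Type*} [Field K] [CharZero K] (p : K[X]) (k : ℕ) :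
    (Ring.choose p k).natDegree ≤ k * p.natDegree := by
  have h := Ring.descPochhammer_eq_factorial_smul_choose p k
  rw [← aeval_eq_smeval, ← aeval_map_algebraMap K, descPochhammer_map, ← comp_eq_aeval,
    nsmul_eq_mul, ← C_eq_natCast] at h
  rw [← natDegree_C_mul (a := (k.factorial : K)) (Nat.cast_ne_zero.2 k.factorial_ne_zero), ← h]
  simpa [descPochhammer_natDegree] using natDegree_comp_le (p := descPochhammer K k) (q := p)

-- Both sides are the multinomial coefficient `(m + n - j)! / (j! (m - j)! (n - j)!)`.
theorem Nat.choose_mul_choose_add_sub_comm (m n j : ℕ) :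
    m.choose j * (m + n - j).choose m = n.choose j * (m + n - j).choose n := by
  rcases lt_or_ge m j with hm | hm <;> rcases lt_or_ge n j with hn | hn
  · simp [Nat.choose_eq_zero_of_lt hm, Nat.choose_eq_zero_of_lt hn]
  · simp [Nat.choose_eq_zero_of_lt hm, Nat.choose_eq_zero_of_lt (by omega : m + n - j < n)]
  · simp [Nat.choose_eq_zero_of_lt hn, Nat.choose_eq_zero_of_lt (by omega : m + n - j < m)]
  rw [mul_comm, Nat.choose_mul hm, mul_comm (n.choose j), Nat.choose_mul hn,
    Nat.choose_symm_of_eq_add (by omega : m + n - j - j = m - j + (n - j))]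

theorem Finset.sum_range_succ_eq_of_symm {M : Type*} [AddCommMonoid M]
    (F : ℕ → ℕ → ℕ → M) (hsymm : ∀ n m j, F n m j = F m n j)
    (hzero : ∀ n m j, n < j → F n m j = 0) (n m : ℕ) :
    ∑ j ∈ range (n + 1), F n m j = ∑ j ∈ range (m + 1), F m n j := by
  have extend : ∀ a b, ∑ j ∈ range (a + 1), F a b j = ∑ j ∈ range (a + b + 1), F a b j :=
    fun a b ↦ sum_subset (range_subset_range.2 (by omega)) fun j _ hj ↦
      hzero a b j (by simpa using hj)
  rw [extend, extend, add_comm m, sum_congr rfl fun j _ ↦ hsymm n m j]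

def natBinomSqSum (n m : ℕ) : ℕ :=
  ∑ k ∈ range (n + 1), (m + k).choose k ^ 2 * m.choose (n - k) ^ 2

def natCentralBinomSum (n m : ℕ) : ℕ :=
  ∑ k ∈ range (n + 1), (n + k).choose (2 * k) * (2 * k).choose k ^ 2 * (m + k).choose (2 * k)

theorem natBinomSqSum_eq_sum_sq (n m : ℕ) :
    natBinomSqSum n m = ∑ j ∈ range (n + 1), (n.choose j * (n + m - j).choose n) ^ 2 := by
  rw [natBinomSqSum, ← sum_range_reflect]
  refine sum_congr rfl fun j hj ↦ ?_
  have hjn : j ≤ n := Nat.lt_succ_iff.1 (mem_range.1 hj)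
  rw [add_tsub_cancel_right, Nat.sub_sub_self hjn, add_comm n m,
    ← Nat.choose_mul_choose_add_sub_comm, mul_pow, mul_comm,
    Nat.choose_symm_of_eq_add (by omega : m + (n - j) = n - j + m),
    Nat.add_sub_assoc hjn]

theorem natBinomSqSum_comm (n m : ℕ) : natBinomSqSum n m = natBinomSqSum m n := by
  simp only [natBinomSqSum_eq_sum_sq]
  refine sum_range_succ_eq_of_symm (fun n m j ↦ (n.choose j * (n + m - j).choose n) ^ 2)
    (fun n m j ↦ ?_) (fun n m j h ↦ by simp [Nat.choose_eq_zero_of_lt h]) n m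
  rw [Nat.choose_mul_choose_add_sub_comm, add_comm]

theorem natCentralBinomSum_comm (n m : ℕ) : natCentralBinomSum n m = natCentralBinomSum m n :=
  sum_range_succ_eq_of_symm
    (fun n m k ↦ (n + k).choose (2 * k) * (2 * k).choose k ^ 2 * (m + k).choose (2 * k))
    (fun _ _ _ ↦ by ring)
    (fun n m k h ↦ by simp [Nat.choose_eq_zero_of_lt (by omega : n + k < 2 * k)]) n m

theorem natBinomSqSum_self (n : ℕ) : natBinomSqSum n n = natCentralBinomSum n n := by
  refine sum_congr rfl fun k hk ↦ ?_
  have hkn : k ≤ n := Nat.lt_succ_iff.1 (mem_range.1 hk)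
  have h := Nat.choose_mul (n := n + k) (k := 2 * k) (s := k) (by omega)
  rw [add_tsub_cancel_right, show 2 * k - k = k by omega] at h
  rw [Nat.choose_symm hkn, ← mul_pow, mul_right_comm, ← sq, ← mul_pow, h]

section BinomialRing

variable {R S : Type*} [CommRing R] [BinomialRing R] [CommRing S] [BinomialRing S]

def binomSqSum (n : ℕ) (r : R) : R :=
  ∑ k ∈ range (n + 1), Ring.choose (-r - 1) k ^ 2 * Ring.choose r (n - k) ^ 2

def centralBinomSum (n : ℕ) (r : R) : R :=
  ∑ k ∈ range (n + 1),
    ((n + k).choose (2 * k) : R) * ((2 * k).choose k : R) ^ 2 * Ring.choose (r + k) (2 * k)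

theorem binomSqSum_neg_sub_one (n : ℕ) (r : R) : binomSqSum n (-r - 1) = binomSqSum n r := by
  rw [binomSqSum, ← sum_range_reflect]
  refine sum_congr rfl fun k hk ↦ ?_
  have hkn : k ≤ n := Nat.lt_succ_iff.1 (mem_range.1 hk)
  rw [add_tsub_cancel_right, Nat.sub_sub_self hkn, neg_sub, sub_neg_eq_add, add_sub_cancel_left,
    mul_comm]

theorem centralBinomSum_neg_sub_one (n : ℕ) (r : R) :
    centralBinomSum n (-r - 1) = centralBinomSum n r := by
  simp only [centralBinomSum, Ring.choose_neg_sub_one_add_two_mul]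

theorem map_binomSqSum (f : R →+* S) (n : ℕ) (r : R) :
    f (binomSqSum n r) = binomSqSum n (f r) := by
  simp [binomSqSum, Ring.map_choose]

theorem map_centralBinomSum (f : R →+* S) (n : ℕ) (r : R) :
    f (centralBinomSum n r) = centralBinomSum n (f r) := by
  simp [centralBinomSum, Ring.map_choose]

theorem binomSqSum_natCast (n m : ℕ) : binomSqSum n (m : R) = natBinomSqSum n m := by
  simp [binomSqSum, natBinomSqSum, Ring.choose_neg_sub_one_sq, ← Nat.cast_add,
    Ring.choose_natCast]

theorem centralBinomSum_natCast (n m : ℕ) :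
    centralBinomSum n (m : R) = natCentralBinomSum n m := by
  simp [centralBinomSum, natCentralBinomSum, ← Nat.cast_add, Ring.choose_natCast]

end BinomialRing

section Polynomial

variable {K : Type*} [Field K] [CharZero K]

theorem eval_binomSqSum_X (n : ℕ) (r : K) :
    (binomSqSum n (X : K[X])).eval r = binomSqSum n r := by
  rw [← coe_evalRingHom, map_binomSqSum, coe_evalRingHom, eval_X]

theorem eval_centralBinomSum_X (n : ℕ) (r : K) :
    (centralBinomSum n (X : K[X])).eval r = centralBinomSum n r := by
  rw [← coe_evalRingHom, map_centralBinomSum, coe_evalRingHom, eval_X]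

theorem natDegree_binomSqSum_X_le (n : ℕ) : (binomSqSum n (X : K[X])).natDegree ≤ 2 * n := by
  refine natDegree_sum_le_of_forall_le _ _ fun k hk ↦ ?_
  have hkn : k ≤ n := Nat.lt_succ_iff.1 (mem_range.1 hk)
  have h₁ : (Ring.choose (-X - 1 : K[X]) k).natDegree ≤ k :=
    (natDegree_ringChoose_le _ k).trans (mul_le_of_le_one_right k.zero_le (by compute_degree))
  have h₂ : (Ring.choose (X : K[X]) (n - k)).natDegree ≤ n - k :=
    (natDegree_ringChoose_le _ _).trans (by rw [natDegree_X, mul_one])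
  refine natDegree_mul_le.trans ?_
  have := add_le_add (natDegree_pow_le_of_le 2 h₁) (natDegree_pow_le_of_le 2 h₂)
  omega

theorem natDegree_centralBinomSum_X_le (n : ℕ) :
    (centralBinomSum n (X : K[X])).natDegree ≤ 2 * n := by
  refine natDegree_sum_le_of_forall_le _ _ fun k hk ↦ ?_
  have hkn : k ≤ n := Nat.lt_succ_iff.1 (mem_range.1 hk)
  have h : (Ring.choose (X + (k : K[X])) (2 * k)).natDegree ≤ 2 * k :=
    (natDegree_ringChoose_le _ _).trans (mul_le_of_le_one_right (Nat.zero_le _) (by compute_degree))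
  refine natDegree_mul_le.trans ?_
  rw [← Nat.cast_pow, ← Nat.cast_mul, natDegree_natCast]
  omega

theorem binomSqSum_X_eq_of_forall_le {n : ℕ}
    (h : ∀ m ≤ n, natBinomSqSum n m = natCentralBinomSum n m) :
    binomSqSum n (X : K[X]) = centralBinomSum n X := by
  have hnat (m : Fin (n + 1)) : binomSqSum n (m : K) = centralBinomSum n (m : K) := by
    rw [binomSqSum_natCast, centralBinomSum_natCast, h m (Nat.lt_succ_iff.1 m.isLt)]
  let node : Fin (n + 1) ⊕ Fin (n + 1) → K :=
    Sum.elim (fun m ↦ ((m : ℕ) : K)) (fun m ↦ -((m : ℕ) : K) - 1)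
  have hnode : Function.Injective node := by
    refine (Nat.cast_injective.comp Fin.val_injective).sumElim
      ((sub_left_injective.comp neg_injective).comp (Nat.cast_injective.comp Fin.val_injective))
      fun a b hab ↦ ?_
    simp only [Function.comp_apply] at hab
    exact Nat.cast_add_one_ne_zero (a + b : ℕ) (by push_cast; linear_combination hab)
  refine eq_of_natDegree_lt_card_of_eval_eq _ _ hnode (fun i ↦ ?_) ?_
  · rcases i with m | m
    · simpa [node, eval_binomSqSum_X, eval_centralBinomSum_X] using hnat m
    · simpa [node, eval_binomSqSum_X, eval_centralBinomSum_X, binomSqSum_neg_sub_one,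
        centralBinomSum_neg_sub_one] using hnat m
  · have := natDegree_binomSqSum_X_le (K := K) n
    have := natDegree_centralBinomSum_X_le (K := K) n
    simp only [Fintype.card_sum, Fintype.card_fin]
    omega

end Polynomial

theorem natBinomSqSum_eq_natCentralBinomSum (n m : ℕ) :
    natBinomSqSum n m = natCentralBinomSum n m := by
  induction n using Nat.strong_induction_on generalizing m with
  | _ n ih =>
  suffices h : binomSqSum n (X : ℚ[X]) = centralBinomSum n X by
    have := congrArg (eval (m : ℚ)) h
    rwa [eval_binomSqSum_X, eval_centralBinomSum_X, binomSqSum_natCast, centralBinomSum_natCast,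
      Nat.cast_inj] at this
  refine binomSqSum_X_eq_of_forall_le fun k hk ↦ ?_
  rcases hk.lt_or_eq with hk | rfl
  · rw [natBinomSqSum_comm, ih k hk, natCentralBinomSum_comm]
  · exact natBinomSqSum_self k

theorem stmt_0 (n : ℕ) :
    ∑ k ∈ range (n + 1),
        (Ring.choose (-(X : ℚ[X]) - 1) k) ^ 2 * (Ring.choose (X : ℚ[X]) (n - k)) ^ 2 =
      ∑ k ∈ range (n + 1),
        ((n + k).choose (2 * k) : ℚ[X]) * (((2 * k).choose k : ℚ[X])) ^ 2 *
          Ring.choose ((X : ℚ[X]) + (k : ℚ[X])) (2 * k) :=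
  binomSqSum_X_eq_of_forall_le fun m _ ↦ natBinomSqSum_eq_natCentralBinomSum n m
end

section
/- For all non-negative integers n and k with k ≤ n-1, we have ∑_{m=k}^{n-1} (2m+1) · C(m+k, 2k) · C(2k, k) = n · C(n, k+1) · C(n+k, k). -/
open Finset

/-!
Every term with `m < k` vanishes, so the sum may run over `m < n`. After multiplying by `k + 1`
and trading `C(2k, k)` for `C(2k+1, k)` via `(2k+1) C(2k, k) = (k+1) C(2k+1, k)`, the claim
reduces to the hockey-stick-type identity
`(k+1) ∑_{m<n} (2m+1) C(m+k, 2k) = (2k+1) n C(n+k, 2k+1)`, proved by induction on `n` with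
Pascal's rule, and to the trinomial revision `C(n+k, 2k+1) C(2k+1, k) = C(n+k, k) C(n, k+1)`.
-/

namespace Nat

theorem succ_mul_sum_range_odd_mul_choose (n k : ℕ) :
    (k + 1) * ∑ m ∈ range n, (2 * m + 1) * (m + k).choose (2 * k) =
      (2 * k + 1) * n * (n + k).choose (2 * k + 1) := by
  induction n with
  | zero => simp
  | succ n ih =>
    rw [sum_range_succ, mul_add, ih, show n + 1 + k = n + k + 1 by ring, choose_succ_succ']
    have hd := choose_succ_right_eq (n + k) (2 * k)
    rcases lt_or_ge n k with hnk | hkn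
    · have hc : (n + k).choose (2 * k) = 0 := choose_eq_zero_of_lt (by omega)
      have hd' : (n + k).choose (2 * k + 1) = 0 := choose_eq_zero_of_lt (by omega)
      simp [hc, hd']
    · obtain ⟨e, rfl⟩ := exists_add_of_le hkn
      rw [show k + e + k - 2 * k = e by omega] at hd
      nlinarith [hd]

theorem two_mul_add_one_mul_choose_two_mul (k : ℕ) :
    (2 * k + 1) * (2 * k).choose k = (k + 1) * (2 * k + 1).choose k := by
  rw [add_one_mul_choose_eq, choose_symm_half, mul_comm]

end Nat

theorem stmt_1_general (n k : ℕ) :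
    ∑ m ∈ Finset.Ico k n, (2 * m + 1) * (m + k).choose (2 * k) * (2 * k).choose k =
      n * n.choose (k + 1) * (n + k).choose k := by
  have h_range : ∑ m ∈ Ico k n, (2 * m + 1) * (m + k).choose (2 * k) =
      ∑ m ∈ range n, (2 * m + 1) * (m + k).choose (2 * k) := by
    refine sum_subset (fun m hm => mem_range.2 (mem_Ico.1 hm).2) fun m hmn hm => ?_
    have hmk : m < k := by
      by_contra hkm
      exact hm (mem_Ico.2 ⟨not_lt.1 hkm, mem_range.1 hmn⟩)
    rw [Nat.choose_eq_zero_of_lt (by omega), mul_zero]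
  apply Nat.eq_of_mul_eq_mul_left k.succ_pos
  calc (k + 1) * ∑ m ∈ Ico k n, (2 * m + 1) * (m + k).choose (2 * k) * (2 * k).choose k
      = (k + 1) * (∑ m ∈ range n, (2 * m + 1) * (m + k).choose (2 * k)) * (2 * k).choose k := by
        rw [← sum_mul, h_range, mul_assoc]
    _ = n * (n + k).choose (2 * k + 1) * ((2 * k + 1) * (2 * k).choose k) := by
        rw [Nat.succ_mul_sum_range_odd_mul_choose]; ring
    _ = (k + 1) * (n * ((n + k).choose (2 * k + 1) * (2 * k + 1).choose k)) := by
        rw [Nat.two_mul_add_one_mul_choose_two_mul]; ring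
    _ = (k + 1) * (n * n.choose (k + 1) * (n + k).choose k) := by
        rw [Nat.choose_mul (by omega), show n + k - k = n by omega,
          show 2 * k + 1 - k = k + 1 by omega]
        ring

theorem stmt_1 (n k : ℕ) (h : k ≤ n - 1) (hn : 0 < n) :
    ∑ m ∈ Finset.Ico k n, (2 * m + 1) * (m + k).choose (2 * k) * (2 * k).choose k =
      n * n.choose (k + 1) * (n + k).choose k :=
  stmt_1_general n k
end

section
/- Let n be a positive integer and x an integer. Then n divides the integer ∑_{k=0}^{n-1} (2k+1) · ∑_{j=0}^{k} C(-x-1, j)^2 · C(x, k-j)^2. (Case l = 1, ε = +1 of the main theorem.) -/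
/-!
Let `f x m = ∑ⱼ C(-x-1, j)² C(x, m-j)²` and `g x m = ∑ₖ C(m+k, k) C(m, k) C(x+k, k) C(x, k)`.
Creative telescoping, with the explicit certificates `sqConvCert` and `sumChooseProdCert`, shows
that both satisfy the same Apéry-like three-term recurrence in `m`; they agree for `m = 0, 1`, hence
`f = g`. In `g` the weight of `C(x+k, k) C(x, k)` telescopes against `2m + 1`:
`∑_{m<n} (2m+1) C(m+k, k) C(m, k) = n C(n+k, k) C(n, k+1)`, so the sum in question is `n` times
an integer.
-/

open Finset

namespace Ring

variable {R : Type*} [CommRing R] [BinomialRing R]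

theorem choose_succ_right_eq (r : R) (k : ℕ) :
    choose r (k + 1) * (k + 1) = choose r k * (r - k) := by
  have h := choose_smul_choose r (Nat.le_add_right k 1)
  rw [Nat.choose_succ_self_right, Nat.add_sub_cancel_left, choose_one_right, nsmul_eq_mul] at h
  push_cast at h
  rw [mul_comm, h]

theorem succ_mul_choose_eq (r : R) (k : ℕ) :
    (r + 1) * choose r k = choose (r + 1) (k + 1) * (k + 1) := by
  rw [choose_succ_succ]
  linear_combination -choose_succ_right_eq r k

theorem choose_mul_succ_eq (r : R) (k : ℕ) :
    choose r k * (r + 1) = choose (r + 1) k * (r + 1 - k) := by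
  cases k with
  | zero => simp
  | succ k =>
    rw [choose_succ_succ, Nat.cast_succ]
    linear_combination choose_succ_right_eq r k

end Ring

section BinomialRing

variable {R : Type*} [CommRing R] [BinomialRing R]

def chooseProd (y : R) (k : ℕ) : R := Ring.choose (y + k) k * Ring.choose y k

@[simp]
theorem chooseProd_zero_right (y : R) : chooseProd y 0 = 1 := by
  simp [chooseProd]

theorem chooseProd_natCast_of_lt {m k : ℕ} (h : m < k) : chooseProd (m : R) k = 0 := by
  rw [chooseProd, Ring.choose_natCast, Nat.choose_eq_zero_of_lt h, Nat.cast_zero, mul_zero]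

theorem chooseProd_succ (y : R) (k : ℕ) :
    chooseProd y (k + 1) * (k + 1) ^ 2 = chooseProd y k * ((y + k + 1) * (y - k)) := by
  have h₁ := Ring.succ_mul_choose_eq (y + k) k
  have h₂ := Ring.choose_succ_right_eq y k
  rw [chooseProd, chooseProd, Nat.cast_succ, ← add_assoc]
  linear_combination (Ring.choose y (k + 1) * (k + 1)) * h₁.symm
    + Ring.choose (y + k) k * (y + k + 1) * h₂

theorem chooseProd_eq_centralBinom_mul (y : R) (k : ℕ) :
    chooseProd y k = (2 * k).choose k * Ring.choose (y + k) (2 * k) := by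
  have h := Ring.choose_smul_choose (y + k) (show k ≤ 2 * k by omega)
  rw [add_sub_cancel_right, show 2 * k - k = k by omega, nsmul_eq_mul] at h
  rw [chooseProd, h]

theorem chooseProd_mul_add_one (y : R) (k : ℕ) :
    chooseProd y k * (y + 1 + k) = chooseProd (y + 1) k * (y + 1 - k) := by
  have h := Ring.choose_mul_succ_eq (y + k) (2 * k)
  rw [chooseProd_eq_centralBinom_mul, chooseProd_eq_centralBinom_mul,
    show y + 1 + k = y + k + 1 by ring]
  push_cast at h
  linear_combination ((2 * k).choose k : R) * h

theorem sum_range_mul_chooseProd (n j : ℕ) :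
    ∑ k ∈ range n, (2 * k + 1) * chooseProd (k : R) j
      = n * Ring.choose ((n : R) + j) j * Ring.choose (n : R) (j + 1) := by
  induction n with
  | zero => simp
  | succ n ih =>
    have h₁ := Ring.choose_mul_succ_eq ((n : R) + j) j
    have h₂ := Ring.choose_succ_right_eq (n : R) j
    rw [sum_range_succ, ih, chooseProd]
    push_cast
    rw [Ring.choose_succ_succ, show (n : R) + 1 + j = n + j + 1 by ring]
    linear_combination (Ring.choose (n : R) j + Ring.choose (n : R) (j + 1)) * h₁
      - Ring.choose ((n : R) + j) j * h₂

def sqConv (x : R) (m : ℕ) : R :=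
  ∑ j ∈ range (m + 1), Ring.choose (-x - 1) j ^ 2 * Ring.choose x (m - j) ^ 2

theorem sqConv_succ (x : R) (m : ℕ) :
    sqConv x (m + 1)
      = ∑ j ∈ range (m + 1), Ring.choose (-x - 1) j ^ 2 * Ring.choose x (m + 1 - j) ^ 2
        + Ring.choose (-x - 1) (m + 1) ^ 2 := by
  simp [sqConv, sum_range_succ (n := m + 1)]

theorem sqConv_add_two (x : R) (m : ℕ) :
    sqConv x (m + 2)
      = ∑ j ∈ range (m + 1), Ring.choose (-x - 1) j ^ 2 * Ring.choose x (m + 2 - j) ^ 2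
        + Ring.choose (-x - 1) (m + 1) ^ 2 * x ^ 2 + Ring.choose (-x - 1) (m + 2) ^ 2 := by
  simp [sqConv, sum_range_succ (n := m + 2), sum_range_succ (n := m + 1),
    show m + 2 - (m + 1) = 1 by omega]

def sumChooseProd (x : R) (m : ℕ) : R :=
  ∑ k ∈ range (m + 1), chooseProd (m : R) k * chooseProd x k

theorem sumChooseProd_eq_sum_range (x : R) {m N : ℕ} (h : m < N) :
    sumChooseProd x m = ∑ k ∈ range N, chooseProd (m : R) k * chooseProd x k := by
  refine sum_subset (range_subset_range.2 h) fun k _ hk => ?_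
  rw [chooseProd_natCast_of_lt (by simpa using hk), zero_mul]

theorem sum_range_mul_sumChooseProd (x : R) (n : ℕ) :
    ∑ k ∈ range n, (2 * k + 1) * sumChooseProd x k
      = n * ∑ j ∈ range n,
          Ring.choose ((n : R) + j) j * Ring.choose (n : R) (j + 1) * chooseProd x j := by
  calc ∑ k ∈ range n, (2 * k + 1) * sumChooseProd x k
      = ∑ k ∈ range n, ∑ j ∈ range n, (2 * k + 1) * chooseProd (k : R) j * chooseProd x j :=
        sum_congr rfl fun k hk => by
          rw [sumChooseProd_eq_sum_range x (mem_range.1 hk), mul_sum]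
          simp only [mul_assoc]
    _ = ∑ j ∈ range n, (∑ k ∈ range n, (2 * k + 1) * chooseProd (k : R) j) * chooseProd x j := by
        rw [sum_comm]
        simp only [sum_mul]
    _ = _ := by simp only [sum_range_mul_chooseProd, mul_sum, mul_assoc]

variable {S : Type*} [CommRing S] [BinomialRing S]

theorem map_sqConv (f : R →+* S) (x : R) (m : ℕ) : f (sqConv x m) = sqConv (f x) m := by
  simp [sqConv, Ring.map_choose]

theorem map_sumChooseProd (f : R →+* S) (x : R) (m : ℕ) :
    f (sumChooseProd x m) = sumChooseProd (f x) m := by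
  simp [sumChooseProd, chooseProd, Ring.map_choose]

end BinomialRing

section Field

variable {K : Type*} [Field K] [CharZero K]

def AperyRecurrence (x : K) (s : ℕ → K) : Prop :=
  ∀ m : ℕ, (m + 2 : K) ^ 3 * s (m + 2)
    = (2 * m + 3) * (m ^ 2 + 3 * m + 3 + 2 * x ^ 2 + 2 * x) * s (m + 1) - (m + 1 : K) ^ 3 * s m

theorem AperyRecurrence.eq {x : K} {s t : ℕ → K} (hs : AperyRecurrence x s)
    (ht : AperyRecurrence x t) (h₀ : s 0 = t 0) (h₁ : s 1 = t 1) : s = t := by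
  funext m
  induction m using Nat.twoStepInduction with
  | zero => exact h₀
  | one => exact h₁
  | more m ih₀ ih₁ =>
    refine mul_left_cancel₀ (pow_ne_zero 3 (by norm_cast) : (m + 2 : K) ^ 3 ≠ 0) ?_
    rw [hs, ht, ih₀, ih₁]

noncomputable def sumChooseProdCert (x : K) (m k : ℕ) : K :=
  ((13 + 29 * m + 21 * m ^ 2 + 5 * m ^ 3 + k * (18 + 24 * m + 8 * m ^ 2) + k ^ 2 * (6 + 4 * m))
      * chooseProd (m : K) k
    - (21 + 41 * m + 27 * m ^ 2 + 6 * m ^ 3) * chooseProd ((m : K) + 1) k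
    + (m + 2) ^ 3 * chooseProd ((m : K) + 2) k) * chooseProd x k

theorem sumChooseProdCert_succ_sub (x : K) (m k : ℕ) :
    sumChooseProdCert x m (k + 1) - sumChooseProdCert x m k
      = ((2 * m + 3) * (m ^ 2 + 3 * m + 3 + 2 * x ^ 2 + 2 * x) * chooseProd ((m : K) + 1) k
        - (m + 1) ^ 3 * chooseProd (m : K) k - (m + 2) ^ 3 * chooseProd ((m : K) + 2) k)
        * chooseProd x k := by
  have hk : (k + 1 : K) ^ 2 ≠ 0 := pow_ne_zero 2 (by norm_cast)
  have succ_eq (y : K) :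
      chooseProd y (k + 1) = chooseProd y k * ((y + k + 1) * (y - k)) / (k + 1) ^ 2 :=
    eq_div_of_mul_eq hk (chooseProd_succ y k)
  have h₀ : chooseProd (m : K) k = chooseProd ((m : K) + 1) k * (m + 1 - k) / (m + 1 + k) :=
    eq_div_of_mul_eq (by norm_cast; omega) (chooseProd_mul_add_one (m : K) k)
  have h₁ : chooseProd ((m : K) + 1) k
      = chooseProd ((m : K) + 2) k * (m + 2 - k) / (m + 2 + k) := by
    refine eq_div_of_mul_eq (by norm_cast; omega) ?_
    have h := chooseProd_mul_add_one ((m : K) + 1) k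
    rwa [show (m : K) + 1 + 1 = m + 2 by ring] at h
  -- Everything is expressed through `chooseProd (m + 2) k`; the denominators `m + 1 + k` and
  -- `m + 2 + k` never vanish, so the identity holds for every `k`, with no boundary terms.
  unfold sumChooseProdCert
  push_cast
  rw [succ_eq x, succ_eq (m : K), succ_eq ((m : K) + 1), succ_eq ((m : K) + 2), h₀, h₁]
  have hm₁ : (m + 1 + k : K) ≠ 0 := by norm_cast; omega
  have hm₂ : (m + 2 + k : K) ≠ 0 := by norm_cast; omega
  generalize chooseProd ((m : K) + 2) k = U
  generalize chooseProd x k = V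
  field_simp
  ring

theorem aperyRecurrence_sumChooseProd (x : K) : AperyRecurrence x (sumChooseProd x) := by
  intro m
  have hvanish : sumChooseProdCert x m (m + 3) = 0 := by
    have h₀ : chooseProd (m : K) (m + 3) = 0 := chooseProd_natCast_of_lt (by omega)
    have h₁ : chooseProd ((m : K) + 1) (m + 3) = 0 := by
      exact_mod_cast chooseProd_natCast_of_lt (R := K) (show m + 1 < m + 3 by omega)
    have h₂ : chooseProd ((m : K) + 2) (m + 3) = 0 := by
      exact_mod_cast chooseProd_natCast_of_lt (R := K) (show m + 2 < m + 3 by omega)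
    simp [sumChooseProdCert, h₀, h₁, h₂]
  have hstart : sumChooseProdCert x m 0 = 0 := by
    simp only [sumChooseProdCert, chooseProd_zero_right]
    ring
  have htel := sum_range_sub (sumChooseProdCert x m) (m + 3)
  simp only [sumChooseProdCert_succ_sub, hvanish, hstart, sub_zero, sub_mul,
    sum_sub_distrib, mul_assoc, ← mul_sum] at htel
  rw [sumChooseProd_eq_sum_range x (show m < m + 3 by omega),
    sumChooseProd_eq_sum_range x (show m + 1 < m + 3 by omega),
    sumChooseProd_eq_sum_range x (show m + 2 < m + 3 by omega)]
  push_cast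
  linear_combination -htel

-- `i` stands for `m + 1 - j`, which keeps truncated subtraction out of the certificate.
noncomputable def sqConvCert (x : K) (m j i : ℕ) : K :=
  j * Ring.choose (-x - 1) j ^ 2
    * ((-m ^ 2 + 3 * m * x - m - 2 * x ^ 2 + 2 * x - j * (2 * x + 1)) * Ring.choose x i ^ 2
      + (m + 2) * (x + 1) * Ring.choose x i * Ring.choose x (i + 1)
      + (m + 2) ^ 2 * Ring.choose x (i + 1) ^ 2)

theorem sqConvCert_succ_sub (x : K) {m j : ℕ} (hj : j ≤ m) :
    sqConvCert x m (j + 1) (m - j) - sqConvCert x m j (m + 1 - j)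
      = Ring.choose (-x - 1) j ^ 2
        * ((2 * m + 3) * (m ^ 2 + 3 * m + 3 + 2 * x ^ 2 + 2 * x) * Ring.choose x (m + 1 - j) ^ 2
          - (m + 1) ^ 3 * Ring.choose x (m - j) ^ 2
          - (m + 2) ^ 3 * Ring.choose x (m + 2 - j) ^ 2) := by
  obtain ⟨i, rfl⟩ : ∃ i, m = j + i := ⟨m - j, by omega⟩
  rw [show j + i - j = i by omega, show j + i + 1 - j = i + 1 by omega,
    show j + i + 2 - j = i + 2 by omega]
  have succ_eq (r : K) (k : ℕ) : Ring.choose r (k + 1) = Ring.choose r k * (r - k) / (k + 1) :=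
    eq_div_of_mul_eq (by norm_cast) (Ring.choose_succ_right_eq r k)
  unfold sqConvCert
  rw [succ_eq _ j, succ_eq x (i + 1), succ_eq x i]
  have hj : (j + 1 : K) ≠ 0 := by norm_cast
  have hi₁ : (i + 1 : K) ≠ 0 := by norm_cast
  have hi₂ : ((i + 1 : ℕ) + 1 : K) ≠ 0 := by norm_cast
  push_cast at hi₂ ⊢
  generalize Ring.choose (-x - 1) j = A
  generalize Ring.choose x i = B
  field_simp
  ring

theorem aperyRecurrence_sqConv (x : K) : AperyRecurrence x (sqConv x) := by
  intro m
  have htel := sum_range_sub (fun j => sqConvCert x m j (m + 1 - j)) (m + 1)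
  simp only [Nat.add_sub_add_right, Nat.sub_self] at htel
  rw [sum_congr rfl fun j hj => sqConvCert_succ_sub x (m := m) (by rw [mem_range] at hj; omega)]
    at htel
  simp only [mul_sub, sum_sub_distrib, mul_left_comm (Ring.choose (-x - 1) _ ^ 2), ← mul_sum]
    at htel
  have hlast := Ring.choose_succ_right_eq (-x - 1) (m + 1)
  push_cast at hlast
  rw [sqConv_add_two, sqConv_succ, sqConv]
  simp only [sqConvCert, Ring.choose_zero_right, zero_add, Ring.choose_one_right, Nat.cast_zero,
    Nat.cast_succ] at htel
  linear_combination -htel + (m + 2) * (Ring.choose (-x - 1) (m + 2) * (m + 2)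
    + Ring.choose (-x - 1) (m + 1) * (-x - 1 - (m + 1))) * hlast

theorem sqConv_eq_sumChooseProd (x : K) : sqConv x = sumChooseProd x := by
  refine (aperyRecurrence_sqConv x).eq (aperyRecurrence_sumChooseProd x) ?_ ?_
  · simp [sqConv, sumChooseProd]
  · simp [sqConv, sumChooseProd, sum_range_succ, chooseProd]
    ring

end Field

theorem Int.sqConv_eq_sumChooseProd (x : ℤ) (m : ℕ) : sqConv x m = sumChooseProd x m := by
  have h := congrFun (_root_.sqConv_eq_sumChooseProd (x : ℚ)) m
  rw [← eq_intCast (Int.castRingHom ℚ), ← map_sqConv, ← map_sumChooseProd] at h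
  exact (Int.castRingHom ℚ).injective_int h

theorem stmt_3_general (n : ℕ) (x : ℤ) :
    (n : ℤ) ∣ ∑ k ∈ range n, (2 * (k : ℤ) + 1) *
        ∑ j ∈ range (k + 1),
          (Ring.choose (-x - 1) j) ^ 2 * (Ring.choose x (k - j)) ^ 2 := by
  have h := sum_range_mul_sumChooseProd x n
  simp only [← Int.sqConv_eq_sumChooseProd] at h
  exact Dvd.intro _ h.symm

theorem stmt_3 (n : ℕ) (hn : 0 < n) (x : ℤ) :
    (n : ℤ) ∣ ∑ k ∈ range n, (2 * (k : ℤ) + 1) *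
        ∑ j ∈ range (k + 1),
          (Ring.choose (-x - 1) j) ^ 2 * (Ring.choose x (k - j)) ^ 2 :=
  stmt_3_general n x
end

section
/- Let l and n be positive integers and ε = ±1. Define the multi-variable Schmidt polynomial S_k(x_0,…,x_k) = ∑_{i=0}^{k} C(k+i, 2i)·C(2i, i)·x_i. Then in the polynomial ∑_{k=0}^{n-1} ε^k (2k+1)^{2l-1} · S_k(x_0,…,x_k), the coefficient of each x_i is divisible by n. -/
/-!
Write `a k i = C(k+i, 2i) C(2i, i) = C(k+i, i) C(k, i)` for the coefficient of `x_i` in `S_k`.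
The identity `(2k+1)² a k i = 4(i+1)² a k (i+1) + (2i+1)² a k i` lowers the exponent `2l-1` by two
at the cost of mixing neighbouring coefficients, so by induction on `l` it suffices to treat the
exponent `1`. There the sums have closed forms carrying the factor `n`:
`∑_{k<n} (2k+1) a k i = n C(n+i, i) C(n, i+1)` and
`∑_{k≤n} (-1)^k (2k+1) a k i = (-1)^n (n+1) C(n+1+i, i) C(n, i)`.
-/

open Finset

def schmidtCoeff (k i : ℕ) : ℕ := (k + i).choose (2 * i) * (2 * i).choose i

theorem schmidtCoeff_eq (k i : ℕ) : schmidtCoeff k i = (k + i).choose i * k.choose i := by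
  rcases le_or_gt i k with hik | hki
  · simpa [schmidtCoeff, two_mul] using Nat.choose_mul (n := k + i) (k := 2 * i) (s := i) (by omega)
  · simp [schmidtCoeff, Nat.choose_eq_zero_of_lt hki,
      Nat.choose_eq_zero_of_lt (show k + i < 2 * i by omega)]

theorem intCast_sub_mul_choose_succ (n j : ℕ) :
    ((n : ℤ) + 1 - j) * (n + 1).choose j = ((n : ℤ) + 1) * n.choose j := by
  rcases le_or_gt j (n + 1) with hj | hj
  · have h := Nat.choose_mul_succ_eq n j
    zify [hj] at h
    linarith
  · simp [Nat.choose_eq_zero_of_lt hj, Nat.choose_eq_zero_of_lt (n.lt_succ_self.trans hj)]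

theorem intCast_choose_succ_right (k j : ℕ) :
    ((j : ℤ) + 1) * k.choose (j + 1) = ((k : ℤ) - j) * k.choose j := by
  rcases le_or_gt j k with hjk | hkj
  · have h := Nat.choose_succ_right_eq k j
    zify [hjk] at h
    linarith
  · simp [Nat.choose_eq_zero_of_lt hkj, Nat.choose_eq_zero_of_lt (hkj.trans j.lt_succ_self)]

theorem intCast_succ_mul_choose (k j : ℕ) :
    ((k : ℤ) + 1) * k.choose j = ((j : ℤ) + 1) * (k + 1).choose (j + 1) := by
  exact_mod_cast by linarith [Nat.add_one_mul_choose_eq k j]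

theorem sq_two_mul_add_one_mul_schmidtCoeff (k i : ℕ) :
    (2 * (k : ℤ) + 1) ^ 2 * schmidtCoeff k i =
      4 * ((i : ℤ) + 1) ^ 2 * schmidtCoeff k (i + 1) + (2 * (i : ℤ) + 1) ^ 2 * schmidtCoeff k i := by
  have hk := intCast_choose_succ_right k i
  have hki := intCast_succ_mul_choose (k + i) i
  simp only [schmidtCoeff_eq, Nat.cast_mul, ← add_assoc]
  push_cast at hki ⊢
  linear_combination (-4 * ((k : ℤ) + i + 1) * (k + i).choose i) * hk +
    (4 * ((i : ℤ) + 1) * k.choose (i + 1)) * hki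

theorem sum_range_two_mul_add_one_mul_schmidtCoeff (n j : ℕ) :
    ∑ k ∈ range n, (2 * (k : ℤ) + 1) * schmidtCoeff k j =
      n * (n + j).choose j * n.choose (j + 1) := by
  induction n with
  | zero => simp
  | succ n ih =>
    have hshift := intCast_sub_mul_choose_succ (n + j) j
    have hright := intCast_choose_succ_right n j
    have hpascal : ((n + 1).choose (j + 1) : ℤ) = n.choose j + n.choose (j + 1) := by
      exact_mod_cast Nat.choose_succ_succ' n j
    rw [sum_range_succ, ih, schmidtCoeff_eq, show n + 1 + j = n + j + 1 by omega]
    push_cast at hshift ⊢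
    linear_combination (-((n + j).choose j : ℤ)) * hright -
      ((n : ℤ) + j + 1) * ((n + j).choose j) * hpascal - ((n + 1).choose (j + 1) : ℤ) * hshift

theorem alternating_sum_range_succ_two_mul_add_one_mul_schmidtCoeff (n j : ℕ) :
    ∑ k ∈ range (n + 1), (-1 : ℤ) ^ k * (2 * (k : ℤ) + 1) * schmidtCoeff k j =
      (-1) ^ n * (n + 1) * (n + 1 + j).choose j * n.choose j := by
  induction n with
  | zero => cases j <;> simp [schmidtCoeff_eq]
  | succ n ih =>
    have hn := intCast_sub_mul_choose_succ n j
    have hshift := intCast_sub_mul_choose_succ (n + 1 + j) j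
    rw [sum_range_succ, ih, schmidtCoeff_eq, show n + 1 + 1 + j = n + 1 + j + 1 by omega]
    push_cast at hn hshift ⊢
    linear_combination (-(-1 : ℤ) ^ n * (n + 1 + j).choose j) * hn +
      ((-1 : ℤ) ^ n * (n + 1).choose j) * hshift

theorem dvd_sum_range_sign_pow_mul_two_mul_add_one_mul_schmidtCoeff {ε : ℤ}
    (hε : ε = 1 ∨ ε = -1) (n i : ℕ) :
    (n : ℤ) ∣ ∑ k ∈ range n, ε ^ k * (2 * (k : ℤ) + 1) * schmidtCoeff k i := by
  rcases hε with rfl | rfl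
  · simp only [one_pow, one_mul, sum_range_two_mul_add_one_mul_schmidtCoeff, mul_assoc]
    exact dvd_mul_right _ _
  · rcases n with _ | n
    · simp
    · rw [alternating_sum_range_succ_two_mul_add_one_mul_schmidtCoeff]
      exact ⟨(-1) ^ n * (n + 1 + i).choose i * n.choose i, by push_cast; ring⟩

theorem dvd_sum_mul_odd_pow_mul_schmidtCoeff {s : Finset ℕ} {w : ℕ → ℤ} {d : ℤ}
    (h : ∀ i, d ∣ ∑ k ∈ s, w k * (2 * (k : ℤ) + 1) * schmidtCoeff k i) (m i : ℕ) :
    d ∣ ∑ k ∈ s, w k * (2 * (k : ℤ) + 1) ^ (2 * m + 1) * schmidtCoeff k i := by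
  induction m generalizing i with
  | zero => simpa using h i
  | succ m ih =>
    have hsplit : ∑ k ∈ s, w k * (2 * (k : ℤ) + 1) ^ (2 * (m + 1) + 1) * schmidtCoeff k i =
        4 * ((i : ℤ) + 1) ^ 2 *
            ∑ k ∈ s, w k * (2 * (k : ℤ) + 1) ^ (2 * m + 1) * schmidtCoeff k (i + 1) +
          (2 * (i : ℤ) + 1) ^ 2 *
            ∑ k ∈ s, w k * (2 * (k : ℤ) + 1) ^ (2 * m + 1) * schmidtCoeff k i := by
      rw [mul_sum, mul_sum, ← sum_add_distrib]
      refine sum_congr rfl fun k _ => ?_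
      linear_combination (w k * (2 * (k : ℤ) + 1) ^ (2 * m + 1)) *
        sq_two_mul_add_one_mul_schmidtCoeff k i
    rw [hsplit]
    exact dvd_add ((ih (i + 1)).mul_left _) ((ih i).mul_left _)

theorem stmt_6_general (l n : ℕ) (hl : 0 < l) (ε : ℤ) (hε : ε = 1 ∨ ε = -1)
    (i : ℕ) :
    (n : ℤ) ∣ ∑ k ∈ Finset.Ico i n,
        ε ^ k * (2 * (k : ℤ) + 1) ^ (2 * l - 1) *
          ((k + i).choose (2 * i) : ℤ) * ((2 * i).choose i : ℤ) := by
  obtain ⟨m, rfl⟩ : ∃ m, l = m + 1 := ⟨l - 1, by omega⟩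
  have hexp : 2 * (m + 1) - 1 = 2 * m + 1 := by omega
  have hsum : ∑ k ∈ Ico i n, ε ^ k * (2 * (k : ℤ) + 1) ^ (2 * (m + 1) - 1) *
        ((k + i).choose (2 * i) : ℤ) * ((2 * i).choose i : ℤ) =
      ∑ k ∈ range n, ε ^ k * (2 * (k : ℤ) + 1) ^ (2 * m + 1) * schmidtCoeff k i := by
    simp only [hexp, schmidtCoeff, Nat.cast_mul, ← mul_assoc]
    refine sum_subset (fun k hk => by simp only [mem_Ico, mem_range] at hk ⊢; omega)
      fun k hkn hk => ?_
    have hki : k < i := by simp only [mem_range, mem_Ico, not_and, not_lt] at hkn hk; omega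
    simp [Nat.choose_eq_zero_of_lt (show k + i < 2 * i by omega)]
  rw [hsum]
  exact dvd_sum_mul_odd_pow_mul_schmidtCoeff
    (dvd_sum_range_sign_pow_mul_two_mul_add_one_mul_schmidtCoeff hε n) m i

theorem stmt_6 (l n : ℕ) (hl : 0 < l) (hn : 0 < n) (ε : ℤ) (hε : ε = 1 ∨ ε = -1)
    (i : ℕ) (hi : i ≤ n - 1) :
    (n : ℤ) ∣ ∑ k ∈ Finset.Ico i n,
        ε ^ k * (2 * (k : ℤ) + 1) ^ (2 * l - 1) *
          ((k + i).choose (2 * i) : ℤ) * ((2 * i).choose i : ℤ) :=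
  stmt_6_general l n hl ε hε i
end

section
/- Let l and n be positive integers and i a non-negative integer with i ≤ n-1. Then n divides ∑_{k=i}^{n-1} (2k+1)^{2l-1} · C(k+i, 2i) · C(2i, i). -/
/-!
Write `w i k = C(k+i, 2i) C(2i, i)`. Since `(2k+1)² - (2i+1)² = 4(k-i)(k+i+1)`, the binomial
identities give `(2k+1)² w i k = (2i+2)² w (i+1) k + (2i+1)² w i k`, so raising the odd exponent
by two reduces the claim to the exponent one less, for the indices `i` and `i+1`. For exponent one
the sum telescopes: `(i+1) ∑_{k<n} (2k+1) C(k+i, 2i) = (2i+1) n C(n+i, 2i+1)`, and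
`i+1` divides `C(2i, i)`.
-/

open Finset

def schmidtWeight (i k : ℕ) : ℤ := (k + i).choose (2 * i) * (2 * i).choose i

theorem Nat.cast_choose_succ_right_mul (n k : ℕ) :
    (n.choose (k + 1) : ℤ) * (k + 1) = n.choose k * (n - k) := by
  rcases le_or_gt k n with hkn | hnk
  · have h := Nat.choose_succ_right_eq n k
    rw [← Nat.cast_sub hkn]
    exact_mod_cast h
  · simp [Nat.choose_eq_zero_of_lt hnk, Nat.choose_eq_zero_of_lt (hnk.trans (Nat.lt_succ_self k))]

theorem Nat.cast_add_one_mul_choose (n k : ℕ) :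
    ((n : ℤ) + 1) * n.choose k = (n + 1).choose (k + 1) * (k + 1) := by
  exact_mod_cast Nat.add_one_mul_choose_eq n k

theorem add_one_mul_sum_range_odd_mul_choose (n i : ℕ) :
    ((i : ℤ) + 1) * ∑ k ∈ range n, (2 * (k : ℤ) + 1) * (k + i).choose (2 * i) =
      (2 * i + 1) * n * (n + i).choose (2 * i + 1) := by
  induction n with
  | zero => simp
  | succ n ih =>
    have hup := Nat.cast_add_one_mul_choose (n + i) (2 * i)
    have hdown := Nat.cast_choose_succ_right_mul (n + i) (2 * i)
    rw [sum_range_succ, mul_add, ih, show n + 1 + i = n + i + 1 by ring]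
    push_cast at hup hdown ⊢
    linear_combination ((n : ℤ) + 1) * hup + (n : ℤ) * hdown

theorem dvd_sum_range_odd_mul_schmidtWeight (n i : ℕ) :
    (n : ℤ) ∣ ∑ k ∈ range n, (2 * (k : ℤ) + 1) * schmidtWeight i k := by
  obtain ⟨c, hc⟩ := Nat.succ_dvd_centralBinom i
  rw [Nat.centralBinom_eq_two_mul_choose] at hc
  have hsum := add_one_mul_sum_range_odd_mul_choose n i
  refine ⟨(2 * i + 1) * (n + i).choose (2 * i + 1) * c, ?_⟩
  simp only [schmidtWeight, hc, ← mul_assoc, ← sum_mul]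
  push_cast
  linear_combination (c : ℤ) * hsum

theorem schmidtWeight_succ (k i : ℕ) :
    (2 * (i : ℤ) + 2) ^ 2 * schmidtWeight (i + 1) k =
      4 * (k + i + 1) * (k - i) * schmidtWeight i k := by
  have hcentral :
      ((i : ℤ) + 1) * (2 * i + 2).choose (i + 1) = 2 * (2 * i + 1) * (2 * i).choose i := by
    have h := Nat.succ_mul_centralBinom_succ i
    simp only [Nat.centralBinom_eq_two_mul_choose, mul_add, mul_one] at h
    exact_mod_cast h
  have hup := Nat.cast_add_one_mul_choose (k + i) (2 * i)
  have hdown := Nat.cast_choose_succ_right_mul (k + i + 1) (2 * i + 1)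
  rw [show 2 * i + 1 + 1 = 2 * i + 2 by ring] at hdown
  simp only [schmidtWeight, show k + (i + 1) = k + i + 1 by ring,
    show 2 * (i + 1) = 2 * i + 2 by ring]
  push_cast at hcentral hup hdown ⊢
  linear_combination (4 * ((i : ℤ) + 1) * (k + i + 1).choose (2 * i + 2)) * hcentral
    + (4 * (2 * (i : ℤ) + 1) * (2 * i).choose i) * hdown
    - (4 * ((k : ℤ) - i) * (2 * i).choose i) * hup

theorem dvd_sum_range_odd_pow_mul_schmidtWeight (l n : ℕ) :
    ∀ i : ℕ,
      (n : ℤ) ∣ ∑ k ∈ range n, (2 * (k : ℤ) + 1) ^ (2 * l + 1) * schmidtWeight i k := by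
  induction l with
  | zero => simpa using dvd_sum_range_odd_mul_schmidtWeight n
  | succ l ih =>
    intro i
    have hsplit : ∑ k ∈ range n, (2 * (k : ℤ) + 1) ^ (2 * (l + 1) + 1) * schmidtWeight i k =
        (2 * (i : ℤ) + 2) ^ 2 *
            ∑ k ∈ range n, (2 * (k : ℤ) + 1) ^ (2 * l + 1) * schmidtWeight (i + 1) k +
          (2 * (i : ℤ) + 1) ^ 2 *
            ∑ k ∈ range n, (2 * (k : ℤ) + 1) ^ (2 * l + 1) * schmidtWeight i k := by
      simp only [mul_sum, ← sum_add_distrib]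
      refine sum_congr rfl fun k _ => ?_
      linear_combination -(2 * (k : ℤ) + 1) ^ (2 * l + 1) * schmidtWeight_succ k i
    rw [hsplit]
    exact dvd_add (dvd_mul_of_dvd_right (ih (i + 1)) _) (dvd_mul_of_dvd_right (ih i) _)

theorem stmt_7_general (l n : ℕ) (hl : 0 < l) (i : ℕ) :
    (n : ℤ) ∣ ∑ k ∈ Finset.Ico i n,
        (2 * (k : ℤ) + 1) ^ (2 * l - 1) *
          ((k + i).choose (2 * i) : ℤ) * ((2 * i).choose i : ℤ) := by
  obtain ⟨m, rfl⟩ := Nat.exists_eq_add_of_lt hl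
  have hrange : ∑ k ∈ Ico i n, (2 * (k : ℤ) + 1) ^ (2 * m + 1) * schmidtWeight i k =
      ∑ k ∈ range n, (2 * (k : ℤ) + 1) ^ (2 * m + 1) * schmidtWeight i k := by
    refine sum_subset (fun k hk => mem_range.2 (mem_Ico.1 hk).2) fun k hkn hki => ?_
    have hk : k < i := by
      by_contra h
      exact hki (mem_Ico.2 ⟨not_lt.1 h, mem_range.1 hkn⟩)
    simp [schmidtWeight, Nat.choose_eq_zero_of_lt (show k + i < 2 * i by omega)]
  simp only [show 2 * (0 + m + 1) - 1 = 2 * m + 1 by omega, mul_assoc]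
  exact hrange ▸ dvd_sum_range_odd_pow_mul_schmidtWeight m n i

theorem stmt_7 (l n : ℕ) (hl : 0 < l) (hn : 0 < n) (i : ℕ) (hi : i ≤ n - 1) :
    (n : ℤ) ∣ ∑ k ∈ Finset.Ico i n,
        (2 * (k : ℤ) + 1) ^ (2 * l - 1) *
          ((k + i).choose (2 * i) : ℤ) * ((2 * i).choose i : ℤ) :=
  stmt_7_general l n hl i
end

section
/- For every non-negative integer n, 16^n · ∑_{k=0}^{n} C(-1/2, k)^2 · C(-1/2, n-k)^2 = ∑_{k=0}^{n} C(2k, k)^3 · C(k, n-k) · (-16)^{n-k}. -/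
/-!
Both sides are diagonal sums `∑_{k ≤ n} F(n, k)`. By creative telescoping, each satisfies
the three-term recurrence
`(n+2)³ u(n+2) = 8(2n+3)(2n²+6n+5) u(n+1) - 256(n+1)³ u(n)`:
for `k ≤ n` the combination of summands in the recurrence is a difference `G(n, k+1) - G(n, k)`
of an explicit certificate `G` (as produced by Zeilberger's algorithm), so it sums to a boundary
term, which cancels against the summands with `k = n + 1, n + 2`. Since the leading coefficient
never vanishes and the initial values agree, the two sequences coincide. The left-hand side is
brought into this form by `C(-1/2, k) = C(2k, k) / (-4)^k`.
-/

open Finset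

open Polynomial in
theorem Ring.succ_mul_choose_succ {R : Type*} [CommRing R] [BinomialRing R] (r : R) (k : ℕ) :
    ((k : R) + 1) * Ring.choose r (k + 1) = (r - k) * Ring.choose r k := by
  have := BinomialRing.toIsAddTorsionFree (R := R)
  have h := descPochhammer_eq_factorial_smul_choose r (k + 1)
  rw [descPochhammer_succ_right, smeval_mul, descPochhammer_eq_factorial_smul_choose] at h
  simp only [smeval_sub, smeval_X, smeval_natCast, pow_one, pow_zero, nsmul_eq_mul,
    Nat.factorial_succ, Nat.cast_mul] at h
  rw [← nsmul_right_inj (Nat.factorial_ne_zero k), nsmul_eq_mul, nsmul_eq_mul]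
  push_cast at h
  linear_combination -h

theorem Nat.cast_centralBinom_succ {K : Type*} [Field K] [CharZero K] (k : ℕ) :
    (Nat.centralBinom (k + 1) : K) = 2 * (2 * k + 1) * Nat.centralBinom k / (k + 1) := by
  rw [eq_div_iff k.cast_add_one_ne_zero, mul_comm]
  exact_mod_cast Nat.succ_mul_centralBinom_succ k

theorem Nat.cast_choose_succ_right {K : Type*} [Field K] [CharZero K] (n k : ℕ) :
    (n.choose (k + 1) : K) = (n - k) * n.choose k / (k + 1) := by
  rw [eq_div_iff k.cast_add_one_ne_zero, mul_comm, ← Ring.choose_natCast, ← Ring.choose_natCast,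
    Ring.succ_mul_choose_succ]

theorem Ring.choose_neg_half {K : Type*} [Field K] [CharZero K] (k : ℕ) :
    Ring.choose (-(1 / 2) : K) k = Nat.centralBinom k / (-4) ^ k := by
  induction k with
  | zero => simp
  | succ k ih =>
    have h := Ring.succ_mul_choose_succ (-(1 / 2) : K) k
    rw [ih, mul_comm, ← eq_div_iff k.cast_add_one_ne_zero] at h
    rw [Nat.cast_centralBinom_succ, h]
    field_simp
    ring

theorem eq_of_three_term_recurrence {R : Type*} [CommRing R] [IsDomain R] {a b c u v : ℕ → R}
    (hc : ∀ n, c n ≠ 0) (hu : ∀ n, c n * u (n + 2) = b n * u (n + 1) - a n * u n)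
    (hv : ∀ n, c n * v (n + 2) = b n * v (n + 1) - a n * v n)
    (h₀ : u 0 = v 0) (h₁ : u 1 = v 1) : u = v := by
  have key : ∀ n, u n = v n ∧ u (n + 1) = v (n + 1) := by
    intro n
    induction n with
    | zero => exact ⟨h₀, h₁⟩
    | succ n ih =>
      refine ⟨ih.2, mul_left_cancel₀ (hc n) ?_⟩
      linear_combination hu n - hv n + b n * ih.2 - a n * ih.1
  exact funext fun n => (key n).1

section CreativeTelescoping

variable {R : Type*} [CommRing R]

def diagSum (F : ℕ → ℕ → R) (n : ℕ) : R := ∑ k ∈ range (n + 1), F n k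

theorem diagSum_recurrence_of_certificate (F : ℕ → ℕ → R) (G : ℕ → R) (a b c : R) (n : ℕ)
    (hcert : ∀ k ≤ n, a * F n k - b * F (n + 1) k + c * F (n + 2) k = G (k + 1) - G k)
    (hG : G 0 = 0)
    (hbdry : c * (F (n + 2) (n + 1) + F (n + 2) (n + 2)) + G (n + 1) = b * F (n + 1) (n + 1)) :
    c * diagSum F (n + 2) = b * diagSum F (n + 1) - a * diagSum F n := by
  have htel : ∑ k ∈ range (n + 1), (a * F n k - b * F (n + 1) k + c * F (n + 2) k) = G (n + 1) :=
    calc _ = ∑ k ∈ range (n + 1), (G (k + 1) - G k) :=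
          sum_congr rfl fun k hk => hcert k (Nat.lt_succ_iff.mp (mem_range.mp hk))
      _ = G (n + 1) := by rw [sum_range_sub, hG, sub_zero]
  simp only [diagSum, sum_range_succ _ (n + 1), sum_range_succ _ (n + 2), mul_add, mul_sum,
    sum_add_distrib, sum_sub_distrib] at htel ⊢
  linear_combination htel + hbdry

end CreativeTelescoping

open Nat (centralBinom)

def centralBinomSqTerm (n k : ℕ) : ℚ := (centralBinom k : ℚ) ^ 2 * centralBinom (n - k) ^ 2

def centralBinomCubeTerm (n k : ℕ) : ℚ :=
  (centralBinom k : ℚ) ^ 3 * k.choose (n - k) * (-16) ^ (n - k)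

def centralBinomSqCert (n k : ℕ) : ℚ :=
  4 * k ^ 2 * ((n + 2) * (4 * n + 5) - 2 * k * (2 * n + 3)) * centralBinom k ^ 2
    * centralBinom (n + 1 - k) ^ 2 / ((n + 1 - k : ℕ) + 1) ^ 2

def centralBinomCubeCert (n k : ℕ) : ℚ :=
  -k ^ 2 * (n + 2) * centralBinom k ^ 3 * k.choose (n + 2 - k) * (-16) ^ (n + 2 - k)

theorem centralBinomSqTerm_certificate {n k : ℕ} (hk : k ≤ n) :
    256 * ((n : ℚ) + 1) ^ 3 * centralBinomSqTerm n k
      - 8 * (2 * n + 3) * (2 * n ^ 2 + 6 * n + 5) * centralBinomSqTerm (n + 1) k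
      + (n + 2) ^ 3 * centralBinomSqTerm (n + 2) k
    = centralBinomSqCert n (k + 1) - centralBinomSqCert n k := by
  obtain ⟨m, rfl⟩ := Nat.exists_eq_add_of_le hk
  simp only [centralBinomSqTerm, centralBinomSqCert, Nat.add_sub_cancel_left,
    show k + m + 1 - k = m + 1 by omega, show k + m + 2 - k = m + 2 by omega,
    show k + m + 1 - (k + 1) = m by omega]
  rw [Nat.cast_centralBinom_succ (m + 1), Nat.cast_centralBinom_succ m,
    Nat.cast_centralBinom_succ k]
  push_cast
  field_simp
  ring

theorem centralBinomCubeTerm_certificate {n k : ℕ} (hk : k ≤ n) :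
    256 * ((n : ℚ) + 1) ^ 3 * centralBinomCubeTerm n k
      - 8 * (2 * n + 3) * (2 * n ^ 2 + 6 * n + 5) * centralBinomCubeTerm (n + 1) k
      + (n + 2) ^ 3 * centralBinomCubeTerm (n + 2) k
    = centralBinomCubeCert n (k + 1) - centralBinomCubeCert n k := by
  obtain ⟨m, rfl⟩ := Nat.exists_eq_add_of_le hk
  simp only [centralBinomCubeTerm, centralBinomCubeCert, Nat.add_sub_cancel_left,
    show k + m + 1 - k = m + 1 by omega, show k + m + 2 - k = m + 2 by omega,
    show k + m + 2 - (k + 1) = m + 1 by omega]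
  rw [Nat.choose_succ_succ']
  push_cast
  rw [Nat.cast_choose_succ_right k (m + 1), Nat.cast_choose_succ_right k m,
    Nat.cast_centralBinom_succ k]
  push_cast
  field_simp
  ring

theorem diagSum_centralBinomSqTerm_recurrence (n : ℕ) :
    ((n : ℚ) + 2) ^ 3 * diagSum centralBinomSqTerm (n + 2)
      = 8 * (2 * n + 3) * (2 * n ^ 2 + 6 * n + 5) * diagSum centralBinomSqTerm (n + 1)
        - 256 * (n + 1) ^ 3 * diagSum centralBinomSqTerm n := by
  refine diagSum_recurrence_of_certificate _ (centralBinomSqCert n) _ _ _ n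
    (fun k hk => centralBinomSqTerm_certificate hk) (by simp [centralBinomSqCert]) ?_
  simp only [centralBinomSqTerm, centralBinomSqCert, Nat.sub_self,
    show n + 2 - (n + 1) = 1 by omega, Nat.centralBinom_zero]
  rw [Nat.cast_centralBinom_succ (n + 1)]
  push_cast
  field_simp
  norm_num [Nat.centralBinom]
  ring

theorem diagSum_centralBinomCubeTerm_recurrence (n : ℕ) :
    ((n : ℚ) + 2) ^ 3 * diagSum centralBinomCubeTerm (n + 2)
      = 8 * (2 * n + 3) * (2 * n ^ 2 + 6 * n + 5) * diagSum centralBinomCubeTerm (n + 1)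
        - 256 * (n + 1) ^ 3 * diagSum centralBinomCubeTerm n := by
  refine diagSum_recurrence_of_certificate _ (centralBinomCubeCert n) _ _ _ n
    (fun k hk => centralBinomCubeTerm_certificate hk) (by simp [centralBinomCubeCert]) ?_
  simp only [centralBinomCubeTerm, centralBinomCubeCert, Nat.sub_self,
    show n + 2 - (n + 1) = 1 by omega, Nat.choose_zero_right, Nat.choose_one_right]
  rw [Nat.cast_centralBinom_succ (n + 1)]
  push_cast
  field_simp
  ring

theorem diagSum_centralBinomSqTerm_eq_diagSum_centralBinomCubeTerm :
    diagSum centralBinomSqTerm = diagSum centralBinomCubeTerm :=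
  eq_of_three_term_recurrence (a := fun n : ℕ => 256 * ((n : ℚ) + 1) ^ 3)
    (b := fun n : ℕ => 8 * (2 * (n : ℚ) + 3) * (2 * n ^ 2 + 6 * n + 5))
    (c := fun n : ℕ => ((n : ℚ) + 2) ^ 3) (fun n => by positivity)
    diagSum_centralBinomSqTerm_recurrence diagSum_centralBinomCubeTerm_recurrence
    (by simp [diagSum, centralBinomSqTerm, centralBinomCubeTerm])
    (by norm_num [diagSum, centralBinomSqTerm, centralBinomCubeTerm, sum_range_succ,
      Nat.centralBinom])

theorem sixteen_pow_mul_choose_neg_half_sq {n k : ℕ} (hk : k ≤ n) :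
    (16 : ℚ) ^ n * (Ring.choose (-(1 / 2) : ℚ) k ^ 2 * Ring.choose (-(1 / 2) : ℚ) (n - k) ^ 2)
      = centralBinomSqTerm n k := by
  have h16 : (16 : ℚ) ^ n = ((-4) ^ k) ^ 2 * ((-4) ^ (n - k)) ^ 2 := by
    rw [← mul_pow, ← pow_add, Nat.add_sub_cancel' hk, ← pow_mul, mul_comm, pow_mul]
    norm_num
  rw [h16, Ring.choose_neg_half, Ring.choose_neg_half, centralBinomSqTerm]
  field_simp

theorem stmt_9 (n : ℕ) :
    (16 : ℚ) ^ n * ∑ k ∈ range (n + 1),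
        (Ring.choose (-(1 / 2) : ℚ) k) ^ 2 * (Ring.choose (-(1 / 2) : ℚ) (n - k)) ^ 2 =
      ∑ k ∈ range (n + 1),
        ((2 * k).choose k : ℚ) ^ 3 * (k.choose (n - k) : ℚ) * (-16 : ℚ) ^ (n - k) := by
  calc _ = diagSum centralBinomSqTerm n := by
        rw [diagSum, mul_sum]
        exact sum_congr rfl fun k hk =>
          sixteen_pow_mul_choose_neg_half_sq (Nat.lt_succ_iff.mp (mem_range.mp hk))
    _ = diagSum centralBinomCubeTerm n := by
        rw [diagSum_centralBinomSqTerm_eq_diagSum_centralBinomCubeTerm]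
    _ = _ := rfl
end

section
/- For every non-negative integer n, 64^n · ∑_{k=0}^{n} C(-1/4, k)^2 · C(-3/4, n-k)^2 = ∑_{k=0}^{n} C(2k, k)^3 · C(2n-2k, n-k) · 16^{n-k}. -/
/-!
Write `(r)ₖ / k!` for `Ring.multichoose r k`, the coefficient of `xᵏ` in `(1 - x)^(-r)`. Since
`C(-r, k) = (-1)ᵏ (r)ₖ / k!` and `C(2k, k) = 4ᵏ (1/2)ₖ / k!`, the identity says that the `n`-th
coefficients of `A · B` and `C₃ · C` agree, where `A = ₂F₁(1/4, 1/4; 1; x)`,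
`B = ₂F₁(3/4, 3/4; 1; x)`, `C = (1 - x)^(-1/2)` and `C₃ = ₃F₂(1/2, 1/2, 1/2; 1, 1; x)`.
Euler's transformation gives `B = A · C` and Clausen's formula gives `A² = C₃`, so
`A · B = A² · C = C₃ · C`. Both formulas are checked coefficientwise by creative telescoping:
a certificate `G` found by Zeilberger's algorithm shows that the two sides satisfy the same
first-order recurrence.
-/

open Finset PowerSeries Ring

theorem Ring.choose_neg_sq {R : Type*} [CommRing R] [BinomialRing R] (r : R) (k : ℕ) :
    Ring.choose (-r) k ^ 2 = multichoose r k ^ 2 := by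
  rw [choose_neg', Units.smul_def, smul_pow, ← Units.val_pow_eq_pow_val, Int.units_sq]
  simp

theorem sum_range_eq_of_creative_telescoping {R : Type*} [CommRing R] [IsDomain R]
    {F G : ℕ → ℕ → R} {T p q : ℕ → R}
    (hp : ∀ m, p m ≠ 0) (h₀ : F 0 0 = T 0) (hT : ∀ m, p m * T (m + 1) = q m * T m)
    (hG : ∀ m k, k ≤ m → p m * F (m + 1) k - q m * F m k = G m (k + 1) - G m k)
    (hG₀ : ∀ m, G m 0 = 0) (hG_top : ∀ m, G m (m + 1) = -(p m * F (m + 1) (m + 1))) (m : ℕ) :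
    ∑ k ∈ range (m + 1), F m k = T m := by
  induction m with
  | zero => simpa using h₀
  | succ m ih =>
    have htel : ∑ k ∈ range (m + 1), (p m * F (m + 1) k - q m * F m k) =
        -(p m * F (m + 1) (m + 1)) := by
      rw [sum_congr rfl fun k hk => hG m k (Nat.lt_succ_iff.mp (mem_range.mp hk)),
        sum_range_sub, hG₀, hG_top, sub_zero]
    rw [sum_sub_distrib, ← mul_sum, ← mul_sum, ih] at htel
    refine mul_left_cancel₀ (hp m) ?_
    rw [hT, sum_range_succ, mul_add]
    linear_combination htel

theorem PowerSeries.coeff_mk_mul_mk {R : Type*} [Semiring R] (f g : ℕ → R) (n : ℕ) :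
    coeff n (mk f * mk g) = ∑ k ∈ range (n + 1), f k * g (n - k) := by
  rw [coeff_mul, Nat.sum_antidiagonal_eq_sum_range_succ_mk]
  simp only [coeff_mk]

variable {K : Type*} [Field K] [CharZero K]

theorem Ring.multichoose_succ_eq (r : K) (k : ℕ) :
    multichoose r (k + 1) = (r + k) / (k + 1) * multichoose r k := by
  have h (n : ℕ) : multichoose r n = (ascPochhammer K n).eval r / n.factorial := by
    rw [eq_div_iff (Nat.cast_ne_zero.mpr n.factorial_ne_zero), mul_comm, ← nsmul_eq_mul,
      factorial_nsmul_multichoose_eq_ascPochhammer, Polynomial.ascPochhammer_smeval_eq_eval]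
  rw [h, h, ascPochhammer_succ_eval, Nat.factorial_succ]
  push_cast
  field_simp

theorem Nat.cast_centralBinom_eq (k : ℕ) :
    (k.centralBinom : K) = 4 ^ k * Ring.multichoose (1 / 2 : K) k := by
  induction k with
  | zero => simp
  | succ k ih =>
    have hrec := congrArg (Nat.cast : ℕ → K) (Nat.succ_mul_centralBinom_succ k)
    push_cast at hrec
    rw [Ring.multichoose_succ_eq, pow_succ]
    field_simp
    linear_combination 2 * hrec + 4 * (2 * (k : K) + 1) * ih

theorem euler_transformation (a b : K) :
    mk (fun k => multichoose a k * multichoose b k) * mk (multichoose (1 - a - b)) =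
      mk fun k => multichoose (1 - a) k * multichoose (1 - b) k := by
  ext m
  rw [coeff_mk_mul_mk, coeff_mk]
  refine sum_range_eq_of_creative_telescoping
    (F := fun m k => multichoose a k * multichoose b k * multichoose (1 - a - b) (m - k))
    (G := fun m k => -(k : K) ^ 2 *
      (multichoose a k * multichoose b k * multichoose (1 - a - b) (m + 1 - k)))
    (T := fun m => multichoose (1 - a) m * multichoose (1 - b) m)
    (p := fun m => ((m : K) + 1) ^ 2) (q := fun m => ((m : K) + 1 - a) * ((m : K) + 1 - b))
    (fun m => pow_ne_zero _ (Nat.cast_add_one_ne_zero m)) ?_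
    (fun m => ?_) (fun m k hk => ?_) (fun m => by simp) (fun m => ?_) m
  · simp
  · simp only [multichoose_succ_eq]
    field_simp
    ring
  · obtain ⟨j, rfl⟩ := Nat.exists_eq_add_of_le hk
    rw [show k + j + 1 - k = j + 1 by omega, show k + j - k = j by omega,
      show k + j + 1 - (k + 1) = j by omega]
    simp only [multichoose_succ_eq]
    push_cast
    field_simp
    ring
  · simp only [Nat.sub_self]
    push_cast
    ring

theorem clausen_formula (a : K) :
    mk (fun k => multichoose a k * multichoose (1 / 2 - a) k) ^ 2 =
      mk fun k => multichoose (2 * a) k * multichoose (1 - 2 * a) k * multichoose (1 / 2) k := by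
  ext m
  rw [sq, coeff_mk_mul_mk, coeff_mk]
  refine sum_range_eq_of_creative_telescoping
    (F := fun m k => multichoose a k * multichoose (1 / 2 - a) k *
      (multichoose a (m - k) * multichoose (1 / 2 - a) (m - k)))
    (G := fun m k => (k : K) ^ 2 * (2 * k - 3 * m - 3) *
      (multichoose a k * multichoose (1 / 2 - a) k *
        (multichoose a (m + 1 - k) * multichoose (1 / 2 - a) (m + 1 - k))))
    (T := fun m => multichoose (2 * a) m * multichoose (1 - 2 * a) m * multichoose (1 / 2) m)
    (p := fun m => ((m : K) + 1) ^ 3)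
    (q := fun m => ((m : K) + 2 * a) * ((m : K) + 1 - 2 * a) * ((m : K) + 1 / 2))
    (fun m => pow_ne_zero _ (Nat.cast_add_one_ne_zero m)) ?_
    (fun m => ?_) (fun m k hk => ?_) (fun m => by simp) (fun m => ?_) m
  · simp
  · simp only [multichoose_succ_eq]
    field_simp
    ring
  · obtain ⟨j, rfl⟩ := Nat.exists_eq_add_of_le hk
    rw [show k + j + 1 - k = j + 1 by omega, show k + j - k = j by omega,
      show k + j + 1 - (k + 1) = j by omega]
    simp only [multichoose_succ_eq]
    push_cast
    field_simp
    ring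
  · simp only [Nat.sub_self]
    push_cast
    ring

theorem clausen_mul_euler (a : K) :
    mk (fun k => multichoose a k * multichoose (1 / 2 - a) k) *
        mk (fun k => multichoose (1 - a) k * multichoose (1 / 2 + a) k) =
      mk (fun k => multichoose (2 * a) k * multichoose (1 - 2 * a) k * multichoose (1 / 2) k) *
        mk (multichoose (1 / 2)) := by
  have hE := euler_transformation a (1 / 2 - a)
  rw [show 1 - a - (1 / 2 - a) = 1 / 2 by ring, show 1 - (1 / 2 - a) = 1 / 2 + a by ring] at hE
  rw [← hE, ← mul_assoc, ← sq, clausen_formula]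

theorem stmt_10 (n : ℕ) :
    (64 : ℚ) ^ n * ∑ k ∈ range (n + 1),
        (Ring.choose (-(1 / 4) : ℚ) k) ^ 2 * (Ring.choose (-(3 / 4) : ℚ) (n - k)) ^ 2 =
      ∑ k ∈ range (n + 1),
        ((2 * k).choose k : ℚ) ^ 3 * ((2 * n - 2 * k).choose (n - k) : ℚ) * (16 : ℚ) ^ (n - k) := by
  have hcoeff := congrArg (coeff n) (clausen_mul_euler (1 / 4 : ℚ))
  norm_num [coeff_mk_mul_mk] at hcoeff
  simp only [choose_neg_sq]
  simp only [sq]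
  rw [hcoeff, mul_sum]
  refine sum_congr rfl fun k hk => ?_
  obtain ⟨j, rfl⟩ := Nat.exists_eq_add_of_le (Nat.lt_succ_iff.mp (mem_range.mp hk))
  rw [← Nat.mul_sub, ← Nat.centralBinom_eq_two_mul_choose, ← Nat.centralBinom_eq_two_mul_choose,
    Nat.cast_centralBinom_eq, Nat.cast_centralBinom_eq, Nat.add_sub_cancel_left]
  have h64 : (64 : ℚ) ^ (k + j) = (4 ^ k) ^ 3 * (4 ^ j * 16 ^ j) := by
    rw [← pow_mul, mul_comm k 3, pow_mul, ← mul_pow, pow_add]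
    norm_num
  rw [h64]
  ring
end

section
/- Let n be a positive integer and x an integer. Then (1/n) · ∑_{k=0}^{n-1} C(n, k+1) · C(n+k, k) · C(2k, k) · C(x+k, 2k) equals ∑_{k=0}^{n-1} (1/(k+1)) · C(n-1, k) · C(n+k, k) · C(2k, k) · C(x+k, 2k), and this common value is an integer. -/
/-!
Termwise, `(1/n) C(n, k+1) = (1/(k+1)) C(n-1, k)` (absorption identity), which gives the equality
of the two sums; and `(1/(k+1)) C(2k, k)` is the Catalan number `catalan k`, so every summand
of the right-hand side is an integer.
-/

open Finset

theorem one_div_mul_choose_succ {K : Type*} [Field K] [CharZero K] {n : ℕ} (hn : 0 < n)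
    (k : ℕ) : 1 / (n : K) * n.choose (k + 1) = 1 / ((k : K) + 1) * (n - 1).choose k := by
  have hcast : (n : K) * (n - 1).choose k = n.choose (k + 1) * ((k : K) + 1) := by
    have h := Nat.add_one_mul_choose_eq (n - 1) k
    rw [Nat.sub_add_cancel hn] at h
    exact_mod_cast h
  have hn0 : (n : K) ≠ 0 := Nat.cast_ne_zero.mpr hn.ne'
  field_simp
  linear_combination -hcast

theorem one_div_succ_mul_centralBinom {K : Type*} [Field K] [CharZero K] (k : ℕ) :
    1 / ((k : K) + 1) * (2 * k).choose k = catalan k := by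
  rw [← Nat.centralBinom_eq_two_mul_choose, ← succ_mul_catalan_eq_centralBinom]
  push_cast
  field_simp

theorem stmt_11 (n : ℕ) (hn : 0 < n) (x : ℤ) :
    (1 / (n : ℚ)) * ∑ k ∈ range n,
        (n.choose (k + 1) : ℚ) * ((n + k).choose k : ℚ) * ((2 * k).choose k : ℚ) *
          ((Ring.choose (x + (k : ℤ)) (2 * k) : ℤ) : ℚ) =
      (∑ k ∈ range n,
        (1 / ((k : ℚ) + 1)) * ((n - 1).choose k : ℚ) * ((n + k).choose k : ℚ) *
          ((2 * k).choose k : ℚ) * ((Ring.choose (x + (k : ℤ)) (2 * k) : ℤ) : ℚ)) ∧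
    ∃ z : ℤ,
      (1 / (n : ℚ)) * ∑ k ∈ range n,
          (n.choose (k + 1) : ℚ) * ((n + k).choose k : ℚ) * ((2 * k).choose k : ℚ) *
            ((Ring.choose (x + (k : ℤ)) (2 * k) : ℤ) : ℚ) = (z : ℚ) := by
  simp only [mul_sum, ← mul_assoc, one_div_mul_choose_succ hn, true_and]
  refine ⟨∑ k ∈ range n, ((n - 1).choose k * (n + k).choose k * catalan k : ℕ) *
      Ring.choose (x + (k : ℤ)) (2 * k), ?_⟩
  push_cast
  refine sum_congr rfl fun k _ => ?_
  rw [← one_div_succ_mul_centralBinom]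
  ring
end

section
/- Let n be a positive integer and k a non-negative integer with k ≤ n-1. Then in the ring ℤ[q], the polynomial ∑_{m=k}^{n-1} [2m+1]_q · qbinom(m+k, 2k) · qbinom(2k, k)^2 · q^{-(k+1)m}, after clearing the negative powers of q (i.e., multiplied by q^{(k+1)(n-1)}), is divisible by [n]_q^2. -/
open Finset Polynomial

/-- The q-integer [n]_q = 1 + q + ⋯ + q^(n-1) as a polynomial in ℤ[q]. -/
noncomputable def qint (n : ℕ) : ℤ[X] := ∑ i ∈ range n, X ^ i

/-- The Gaussian (q-)binomial coefficient, defined via the q-Pascal recurrence,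
a polynomial in q with integer coefficients. -/
noncomputable def qbinom : ℕ → ℕ → ℤ[X]
  | _, 0 => 1
  | 0, _ + 1 => 0
  | n + 1, k + 1 => qbinom n k + X ^ (k + 1) * qbinom n (k + 1)

/-!
Multiplied by `[k+1]`, the sum has the closed form
`[n]² · qbinom(n+k, k) · qbinom(n-1, k) · qbinom(2k, k)`. Both sides satisfy the recursion
`T(n+1) = q^(k+1) T(n) + (new summand)`; after the factorial identities for Gaussian binomials
this reduces to `[a+c][b+c] = q^c [a][b] + [a+b+c][c]`. Since `[k+1]` divides `qbinom(2k, k)`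
(the quotient is the q-Catalan number), `[n]²` divides the sum itself.
-/
noncomputable def qfact : ℕ → ℤ[X]
  | 0 => 1
  | n + 1 => qfact n * qint (n + 1)

lemma qint_add (a b : ℕ) : qint (a + b) = qint a + X ^ a * qint b := by
  simp only [qint, sum_range_add, pow_add, mul_sum]

lemma qint_ne_zero {n : ℕ} (hn : 0 < n) : qint n ≠ 0 := by
  intro h
  have := congrArg (eval 1) h
  simp only [qint, eval_finsetSum, eval_pow, eval_X, one_pow, sum_const, card_range,
    nsmul_eq_mul, mul_one, eval_zero, Nat.cast_eq_zero] at this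
  omega

lemma qint_add_mul_qint_add (a b c : ℕ) :
    qint (a + c) * qint (b + c) = X ^ c * qint a * qint b + qint (a + b + c) * qint c := by
  have hac : qint a + X ^ a * qint c = qint c + X ^ c * qint a := by
    rw [← qint_add, ← qint_add, add_comm]
  rw [add_comm a c, qint_add c a, add_comm b c, qint_add c b, add_comm (a + b) c,
    qint_add c (a + b), qint_add a b]
  linear_combination -(X ^ c * qint b * hac)

lemma qfact_succ (n : ℕ) : qfact (n + 1) = qfact n * qint (n + 1) := rfl

lemma qfact_ne_zero (n : ℕ) : qfact n ≠ 0 := by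
  induction n with
  | zero => exact one_ne_zero
  | succ n ih => exact mul_ne_zero ih (qint_ne_zero n.succ_pos)

@[simp] lemma qbinom_zero_right (n : ℕ) : qbinom n 0 = 1 := by
  cases n <;> rfl

lemma qbinom_succ_succ (n k : ℕ) :
    qbinom (n + 1) (k + 1) = qbinom n k + X ^ (k + 1) * qbinom n (k + 1) := rfl

lemma qbinom_eq_zero_of_lt {n k : ℕ} (h : n < k) : qbinom n k = 0 := by
  induction n generalizing k with
  | zero => obtain ⟨k, rfl⟩ := Nat.exists_eq_succ_of_ne_zero h.ne'; rfl
  | succ n ih =>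
    obtain ⟨k, rfl⟩ := Nat.exists_eq_succ_of_ne_zero (n.succ_pos.trans h).ne'
    rw [qbinom_succ_succ, ih (by omega), ih (by omega), mul_zero, add_zero]

@[simp] lemma qbinom_self (n : ℕ) : qbinom n n = 1 := by
  induction n with
  | zero => rfl
  | succ n ih => rw [qbinom_succ_succ, ih, qbinom_eq_zero_of_lt n.lt_succ_self, mul_zero, add_zero]

lemma qbinom_mul_qfact_mul_qfact (k d : ℕ) :
    qbinom (k + d) k * (qfact k * qfact d) = qfact (k + d) := by
  induction h : k + d generalizing k d with
  | zero =>
    obtain ⟨rfl, rfl⟩ : k = 0 ∧ d = 0 := by omega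
    simp [qfact]
  | succ n ih =>
    rcases k with _ | k
    · obtain rfl : d = n + 1 := by omega
      simp [qfact]
    rcases d with _ | d
    · obtain rfl : k = n := by omega
      simp [qfact]
    have hk := ih k (d + 1) (by omega)
    have hd := ih (k + 1) d (by omega)
    have hq : qint (n + 1) = qint (k + 1) + X ^ (k + 1) * qint (d + 1) := by
      rw [← qint_add]; congr 1; omega
    rw [qfact_succ k] at hd ⊢
    rw [qfact_succ d] at hk ⊢
    rw [qbinom_succ_succ, qfact_succ, hq]
    linear_combination qint (k + 1) * hk + X ^ (k + 1) * qint (d + 1) * hd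

lemma qbinom_succ_right_mul (k d : ℕ) :
    qbinom (k + d + 1) (k + 1) * qint (k + 1) = qbinom (k + d + 1) k * qint (d + 1) := by
  apply mul_right_cancel₀ (mul_ne_zero (qfact_ne_zero k) (qfact_ne_zero d))
  have h₁ := qbinom_mul_qfact_mul_qfact (k + 1) d
  have h₂ := qbinom_mul_qfact_mul_qfact k (d + 1)
  rw [qfact_succ k, add_right_comm] at h₁
  rw [qfact_succ d, ← add_assoc] at h₂
  linear_combination h₁ - h₂

lemma qbinom_mul_qint_succ (k d : ℕ) :
    qbinom (k + d) k * qint (k + d + 1) = qbinom (k + d + 1) k * qint (d + 1) := by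
  apply mul_right_cancel₀ (mul_ne_zero (qfact_ne_zero k) (qfact_ne_zero d))
  have h₁ := qbinom_mul_qfact_mul_qfact k d
  have h₂ := qbinom_mul_qfact_mul_qfact k (d + 1)
  rw [qfact_succ d, ← add_assoc] at h₂
  linear_combination qint (k + d + 1) * h₁ - h₂ + (qfact_succ (k + d)).symm

lemma qbinom_mul_qbinom (s a b : ℕ) :
    qbinom (s + a + b) (s + a) * qbinom (s + a) s = qbinom (s + a + b) s * qbinom (a + b) a := by
  apply mul_right_cancel₀ (mul_ne_zero (mul_ne_zero (qfact_ne_zero s) (qfact_ne_zero a))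
    (qfact_ne_zero b))
  have h₁ := qbinom_mul_qfact_mul_qfact (s + a) b
  have h₂ := qbinom_mul_qfact_mul_qfact s a
  have h₃ := qbinom_mul_qfact_mul_qfact s (a + b)
  have h₄ := qbinom_mul_qfact_mul_qfact a b
  rw [← add_assoc] at h₃
  linear_combination qbinom (s + a + b) (s + a) * qfact b * h₂ + h₁ - h₃
    - qbinom (s + a + b) s * qfact s * h₄

lemma qint_succ_dvd_qbinom_two_mul (k : ℕ) : qint (k + 1) ∣ qbinom (2 * k) k := by
  refine ⟨qbinom (2 * k) k - X * qbinom (2 * k) (k + 1), ?_⟩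
  rcases k with _ | j
  · simp [qint, qbinom_eq_zero_of_lt]
  have h := qbinom_succ_right_mul (j + 1) j
  rw [show j + 1 + j + 1 = 2 * (j + 1) by ring] at h
  have hq : qint (j + 1 + 1) = 1 + X * qint (j + 1) := by
    rw [add_comm, qint_add, pow_one]
    congr 1
    simp [qint]
  linear_combination X * h - qbinom (2 * (j + 1)) (j + 1) * hq

lemma sum_Ico_succ_top_mul_pow {R : Type*} [CommSemiring R] (f : ℕ → R) (x : R) {k n : ℕ}
    (h : k ≤ n) :
    ∑ m ∈ Ico k (n + 1), f m * x ^ (n - m) = x * ∑ m ∈ Ico k n, f m * x ^ (n - 1 - m) + f n := by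
  rw [sum_Ico_succ_top h, Nat.sub_self, pow_zero, mul_one, mul_sum]
  congr 1
  refine sum_congr rfl fun m hm => ?_
  rw [show n - m = n - 1 - m + 1 by grind, pow_succ]
  ring

lemma sum_mul_qint_succ (k e : ℕ) :
    (∑ m ∈ Ico k (k + e + 1), qint (2 * m + 1) * qbinom (m + k) (2 * k) * qbinom (2 * k) k ^ 2 *
      X ^ ((k + 1) * (k + e - m))) * qint (k + 1) =
    qint (k + e + 1) ^ 2 * qbinom (2 * k + e + 1) k * qbinom (k + e) k * qbinom (2 * k) k := by
  simp only [pow_mul]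
  induction e with
  | zero =>
    have h := qbinom_mul_qint_succ k k
    rw [← two_mul] at h
    rw [add_zero, sum_Ico_succ_top_mul_pow _ _ le_rfl, Ico_self, sum_empty, mul_zero, zero_add,
      ← two_mul, qbinom_self, qbinom_self]
    linear_combination qint (k + 1) * qbinom (2 * k) k * h
  | succ e ih =>
    have h1 := qbinom_mul_qbinom k k (e + 1)
    have h2 := qbinom_mul_qint_succ k e
    have h3 := qbinom_mul_qint_succ k (k + e + 1)
    have h4 := qint_add_mul_qint_add (k + e + 1) (e + 1) (k + 1)
    rw [← add_assoc, sum_Ico_succ_top_mul_pow _ _ (by omega), Nat.add_sub_cancel, add_mul,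
      mul_assoc, ih]
    -- `h1`–`h3` pull out the common factor `qbinom(2k, k) · qbinom(2k+e+1, k) · qbinom(k+e+1, k)`;
    -- what is left is the q-integer identity `h4`.
    linear_combination (norm := ring_nf)
      qint (2 * (k + e + 1) + 1) * qint (k + 1) * qbinom (2 * k) k * h1
      + X ^ (k + 1) * qint (k + e + 1) * qbinom (2 * k + e + 1) k * qbinom (2 * k) k * h2
      + qint (k + e + 2) * qbinom (k + e + 1) k * qbinom (2 * k) k * h3
      - qbinom (2 * k + e + 1) k * qbinom (k + e + 1) k * qbinom (2 * k) k * h4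

theorem stmt_15 (n : ℕ) (hn : 0 < n) (k : ℕ) (hk : k ≤ n - 1) :
    (qint n) ^ 2 ∣
      ∑ m ∈ Finset.Ico k n,
        qint (2 * m + 1) * qbinom (m + k) (2 * k) * (qbinom (2 * k) k) ^ 2 *
          X ^ ((k + 1) * (n - 1 - m)) := by
  obtain ⟨e, rfl⟩ : ∃ e, n = k + e + 1 := ⟨n - 1 - k, by omega⟩
  obtain ⟨c, hc⟩ := qint_succ_dvd_qbinom_two_mul k
  refine ⟨qbinom (2 * k + e + 1) k * qbinom (k + e) k * c, ?_⟩
  apply mul_right_cancel₀ (qint_ne_zero k.succ_pos)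
  rw [Nat.add_sub_cancel, sum_mul_qint_succ, hc]
  ring
end

section
/- Let n be a positive integer, l a positive integer, k a non-negative integer with k ≤ n-1, and suppose l = 1. Then n^2 divides ∑_{m=k}^{n-1} (2m+1) · C(m+k, 2k) · C(2k, k)^2. -/
open Finset

/-!
Dividing out one factor `C(2k, k)`, the sum telescopes:
`∑_{m=k}^{n-1} (2m+1) C(m+k, 2k) C(2k, k) = n C(n, k+1) C(n+k, k)`.
The remaining factor `C(n, k+1) C(2k, k)` is again divisible by `n`, because `k + 1` divides the
central binomial coefficient and `C(n, k+1) (k+1) = n C(n-1, k)`.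
-/

namespace Nat

theorem mul_choose_succ_mul_choose_add_succ (n k : ℕ) (hk : k ≤ n) :
    n * n.choose (k + 1) * (n + k).choose k + (2 * n + 1) * (n + k).choose (2 * k) * (2 * k).choose k
      = (n + 1) * (n + 1).choose (k + 1) * (n + k + 1).choose k := by
  have h₁ := choose_succ_right_eq n k
  have h₂ : (n + k).choose (2 * k) * (2 * k).choose k = (n + k).choose k * n.choose k := by
    rw [choose_mul (by omega), Nat.add_sub_cancel, two_mul, Nat.add_sub_cancel]
  have h₃ := add_one_mul_choose_eq n k
  have h₄ : (n + k).choose k * (n + k + 1) = (n + k + 1).choose k * (n + 1) := by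
    rw [choose_mul_succ_eq]; congr 2; omega
  -- both sides become `C(n, k) C(n+k, k)` times a polynomial after multiplying by `(k+1)(n+1)`
  apply Nat.eq_of_mul_eq_mul_right (by positivity : 0 < (k + 1) * (n + 1))
  zify [hk] at *
  linear_combination (n * (n + 1) * ((n + k).choose k : ℤ)) * h₁
    + ((2 * n + 1) * (k + 1) * (n + 1) : ℤ) * h₂
    + ((n + 1) ^ 2 * ((n + k + 1).choose k : ℤ)) * h₃
    + ((n + 1) ^ 2 * (n.choose k : ℤ)) * h₄

theorem sum_Ico_mul_choose_mul_centralBinom (n k : ℕ) :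
    ∑ m ∈ Ico k n, (2 * m + 1) * (m + k).choose (2 * k) * (2 * k).choose k
      = n * n.choose (k + 1) * (n + k).choose k := by
  induction n with
  | zero => simp
  | succ n ih =>
    rcases le_or_gt k n with hk | hk
    · rw [sum_Ico_succ_top hk, ih, mul_choose_succ_mul_choose_add_succ n k hk,
        Nat.add_right_comm n k 1]
    · rw [Ico_eq_empty (by omega), sum_empty, choose_eq_zero_of_lt (by omega : n + 1 < k + 1)]
      simp

theorem dvd_choose_succ_mul_centralBinom (n k : ℕ) : n ∣ n.choose (k + 1) * k.centralBinom := by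
  cases n with
  | zero => simp
  | succ n =>
    obtain ⟨c, hc⟩ := succ_dvd_centralBinom k
    exact ⟨n.choose k * c, by rw [hc, ← mul_assoc, ← add_one_mul_choose_eq, mul_assoc]⟩

end Nat

theorem stmt_16_general (n : ℕ) (k : ℕ) :
    n ^ 2 ∣ ∑ m ∈ Finset.Ico k n,
        (2 * m + 1) * (m + k).choose (2 * k) * ((2 * k).choose k) ^ 2 := by
  have hsum : ∑ m ∈ Ico k n, (2 * m + 1) * (m + k).choose (2 * k) * ((2 * k).choose k) ^ 2
      = n * n.choose (k + 1) * (n + k).choose k * k.centralBinom := by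
    rw [← Nat.sum_Ico_mul_choose_mul_centralBinom, sum_mul, Nat.centralBinom]
    exact sum_congr rfl fun m _ ↦ by ring
  calc n ^ 2 ∣ n * (n.choose (k + 1) * k.centralBinom) := by
        rw [sq]; exact mul_dvd_mul_left n (Nat.dvd_choose_succ_mul_centralBinom n k)
    _ ∣ _ := by rw [hsum]; exact Dvd.intro ((n + k).choose k) (by ring)

theorem stmt_16 (l n : ℕ) (hl : 0 < l) (hn : 0 < n) (hl1 : l = 1) (k : ℕ) (hk : k ≤ n - 1) :
    n ^ 2 ∣ ∑ m ∈ Finset.Ico k n,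
        (2 * m + 1) * (m + k).choose (2 * k) * ((2 * k).choose k) ^ 2 :=
  stmt_16_general n k
end
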